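/- Let p_1 ∈ [0,1] and Σ_1, Σ_2 ∈ S_+(d). If N_d(0, p_1 Σ_1 + (1−p_1) Σ_2) ≤_cx p_1 N_d(0,Σ_1) + (1−p_1) N_d(0,Σ_2), then p_1(1−p_1) = 0 or Σ_1 = Σ_2. -/

import Mathlib

open MeasureTheory ProbabilityTheory Matrix

noncomputable def stdGaussianPi (d : ℕ) : Measure (Fin d → ℝ) :=
  Measure.pi fun _ => gaussianReal 0 1

/-- The Gaussian law `N_d(m, S)` on `ℝ^d`, defined as the image of the standard Gaussian
by `z ↦ m + S^{1/2} z`. -/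
noncomputable def gaussianPi {d : ℕ} (m : Fin d → ℝ) {S : Matrix (Fin d) (Fin d) ℝ}
    (hS : S.PosSemidef) : Measure (Fin d → ℝ) :=
  Measure.map (fun z => m + (hS.1.eigenvectorUnitary.1 *
      diagonal (fun i => Real.sqrt (hS.1.eigenvalues i)) *
      (star hS.1.eigenvectorUnitary : Matrix (Fin d) (Fin d) ℝ)).mulVec z) (stdGaussianPi d)

/-- Convex order between measures: `μ ≤_cx ν`. -/
def ConvexOrder {E : Type*} [NormedAddCommGroup E] [NormedSpace ℝ E] [MeasurableSpace E]
    (μ ν : Measure E) : Prop :=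
  ∀ φ : E → ℝ, ConvexOn ℝ Set.univ φ → Integrable φ μ → Integrable φ ν →
    ∫ x, φ x ∂μ ≤ ∫ x, φ x ∂ν

/-! Testing the convex order against `x ↦ |ξ ⬝ᵥ x|`, whose integral under `N(0, S)` is
`√(ξ ⬝ᵥ S *ᵥ ξ)` times the absolute moment of `N(0, 1)`, gives
`√(ξ ⬝ᵥ (p S₁ + (1 - p) S₂) *ᵥ ξ) ≤ p √(ξ ⬝ᵥ S₁ *ᵥ ξ) + (1 - p) √(ξ ⬝ᵥ S₂ *ᵥ ξ)`.
Squared, this reads `p (1 - p) (√(ξ ⬝ᵥ S₁ *ᵥ ξ) - √(ξ ⬝ᵥ S₂ *ᵥ ξ))² ≤ 0`, so for `0 < p < 1` the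
quadratic forms of `S₁` and `S₂` agree, and a symmetric matrix is determined by its quadratic
form. -/

open Real
open scoped NNReal

lemma eq_of_sqrt_convexComb_le {p a b : ℝ} (hp : 0 < p * (1 - p)) (ha : 0 ≤ a) (hb : 0 ≤ b)
    (h : √(p * a + (1 - p) * b) ≤ p * √a + (1 - p) * √b) : a = b := by
  obtain ⟨-, hsq⟩ := sqrt_le_iff.mp h
  have hgap : p * (1 - p) * (√a - √b) ^ 2 ≤ 0 := by
    calc p * (1 - p) * (√a - √b) ^ 2
        = p * √a ^ 2 + (1 - p) * √b ^ 2 - (p * √a + (1 - p) * √b) ^ 2 := by ring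
      _ ≤ 0 := by rw [sq_sqrt ha, sq_sqrt hb]; linarith
  have hsq_zero : (√a - √b) ^ 2 = 0 :=
    le_antisymm (nonpos_of_mul_nonpos_right hgap hp) (sq_nonneg _)
  exact (sqrt_inj ha hb).mp (sub_eq_zero.mp (pow_eq_zero_iff two_ne_zero |>.mp hsq_zero))

open scoped MatrixOrder ComplexOrder in
lemma Matrix.IsHermitian.eq_of_dotProduct_mulVec_eq {𝕜 n : Type*} [RCLike 𝕜] [Fintype n]
    {A B : Matrix n n 𝕜} (hA : A.IsHermitian) (hB : B.IsHermitian)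
    (h : ∀ x, star x ⬝ᵥ A *ᵥ x = star x ⬝ᵥ B *ᵥ x) : A = B :=
  le_antisymm
    (PosSemidef.of_dotProduct_mulVec_nonneg (hB.sub hA) fun x => by simp [sub_mulVec, h])
    (PosSemidef.of_dotProduct_mulVec_nonneg (hA.sub hB) fun x => by simp [sub_mulVec, h])

lemma integrable_abs_gaussianReal (m : ℝ) (v : ℝ≥0) : Integrable (|·|) (gaussianReal m v) :=
  IsGaussian.integrable_id.abs

lemma integral_abs_gaussianReal (v : ℝ≥0) :
    ∫ y, |y| ∂gaussianReal 0 v = √v * ∫ y, |y| ∂gaussianReal 0 1 := by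
  have hv : gaussianReal 0 v = (gaussianReal 0 1).map (√v * ·) := by
    rw [gaussianReal_map_const_mul, mul_zero, mul_one]
    congr
    ext
    simp
  rw [hv, integral_map (by fun_prop) (by fun_prop)]
  simp_rw [abs_mul, abs_of_nonneg (sqrt_nonneg _)]
  exact integral_const_mul _ _

lemma integral_abs_gaussianReal_one_pos : 0 < ∫ y, |y| ∂gaussianReal 0 1 := by
  have := nullSingletonClass_gaussianReal (μ := 0) one_ne_zero
  rw [integral_pos_iff_support_of_nonneg abs_nonneg (integrable_abs_gaussianReal 0 1)]
  have hsupp : Function.support (|·|) = ({0}ᶜ : Set ℝ) := by ext; simp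
  rw [hsupp, prob_compl_eq_one_sub (measurableSet_singleton 0), measure_singleton]
  simp

lemma map_dotProduct_pi_gaussianReal {ι : Type*} [Fintype ι] (v : ι → ℝ) :
    (Measure.pi fun _ : ι => gaussianReal 0 1).map (v ⬝ᵥ ·) =
      gaussianReal 0 (v ⬝ᵥ v).toNNReal := by
  have hdot : (v ⬝ᵥ ·) = innerSL ℝ (WithLp.toLp 2 v) ∘ WithLp.toLp 2 := by
    ext x
    simp [dotProduct, PiLp.inner_apply, mul_comm]
  rw [hdot, ← Measure.map_map (by fun_prop) (by fun_prop), map_pi_eq_stdGaussian,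
    IsGaussian.map_eq_gaussianReal, integral_strongDual_stdGaussian, variance_dual_stdGaussian,
    innerSL_apply_norm, EuclideanSpace.real_norm_sq_eq]
  simp [dotProduct, sq]

lemma map_dotProduct_map_mulVec_pi_gaussianReal {ι κ : Type*} [Fintype ι] [Fintype κ]
    (A : Matrix κ ι ℝ) (ξ : κ → ℝ) :
    ((Measure.pi fun _ : ι => gaussianReal 0 1).map (A *ᵥ ·)).map (ξ ⬝ᵥ ·) =
      gaussianReal 0 (ξ ⬝ᵥ (A * Aᵀ) *ᵥ ξ).toNNReal := by
  have hcomp : (ξ ⬝ᵥ ·) ∘ (A *ᵥ ·) = (Aᵀ *ᵥ ξ ⬝ᵥ ·) := by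
    ext x
    simp [dotProduct_mulVec, mulVec_transpose]
  have hvar : Aᵀ *ᵥ ξ ⬝ᵥ Aᵀ *ᵥ ξ = ξ ⬝ᵥ (A * Aᵀ) *ᵥ ξ := by
    rw [← mulVec_mulVec, dotProduct_mulVec ξ, mulVec_transpose]
  rw [Measure.map_map (by fun_prop) (by fun_prop), hcomp, map_dotProduct_pi_gaussianReal, hvar]

namespace Matrix.PosSemidef

variable {n : Type*} [Fintype n] [DecidableEq n] {S : Matrix n n ℝ}

noncomputable def eigenSqrt (hS : S.PosSemidef) : Matrix n n ℝ :=
  hS.1.eigenvectorUnitary.1 * diagonal (fun i => √(hS.1.eigenvalues i)) *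
    (star hS.1.eigenvectorUnitary : Matrix n n ℝ)

lemma eigenSqrt_mul_transpose (hS : S.PosSemidef) : hS.eigenSqrt * hS.eigenSqrtᵀ = S := by
  have hU : (hS.1.eigenvectorUnitary.1)ᵀ * hS.1.eigenvectorUnitary.1 = 1 := by
    simpa [star_eq_conjTranspose] using Unitary.star_mul_self_of_mem hS.1.eigenvectorUnitary.2
  have hD : diagonal (fun i => √(hS.1.eigenvalues i)) * diagonal (fun i => √(hS.1.eigenvalues i))
      = diagonal hS.1.eigenvalues := by
    rw [diagonal_mul_diagonal]
    exact congrArg diagonal (funext fun i => mul_self_sqrt (hS.eigenvalues_nonneg i))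
  conv_rhs => rw [hS.1.spectral_theorem]
  simp only [eigenSqrt, transpose_mul, diagonal_transpose, Unitary.conjStarAlgAut_apply,
    star_eq_conjTranspose, conjTranspose_eq_transpose_of_trivial, transpose_transpose]
  rw [Matrix.mul_assoc, Matrix.mul_assoc, ← Matrix.mul_assoc _ _ (diagonal _ * _), hU,
    Matrix.one_mul, ← Matrix.mul_assoc (diagonal _), hD]
  simp [Matrix.mul_assoc]

end Matrix.PosSemidef

section gaussianPi

variable {d : ℕ} {S : Matrix (Fin d) (Fin d) ℝ}

lemma gaussianPi_zero_eq_map (hS : S.PosSemidef) :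
    gaussianPi 0 hS = (stdGaussianPi d).map (hS.eigenSqrt *ᵥ ·) := by
  simp only [gaussianPi, zero_add]
  rfl

lemma map_dotProduct_gaussianPi (hS : S.PosSemidef) (ξ : Fin d → ℝ) :
    (gaussianPi 0 hS).map (ξ ⬝ᵥ ·) = gaussianReal 0 (ξ ⬝ᵥ S *ᵥ ξ).toNNReal := by
  rw [gaussianPi_zero_eq_map, stdGaussianPi, map_dotProduct_map_mulVec_pi_gaussianReal,
    hS.eigenSqrt_mul_transpose]

lemma integrable_abs_dotProduct_gaussianPi (hS : S.PosSemidef) (ξ : Fin d → ℝ) :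
    Integrable (fun x => |ξ ⬝ᵥ x|) (gaussianPi 0 hS) := by
  have h := integrable_abs_gaussianReal 0 (ξ ⬝ᵥ S *ᵥ ξ).toNNReal
  rw [← map_dotProduct_gaussianPi hS] at h
  exact h.comp_measurable (by fun_prop)

lemma integral_abs_dotProduct_gaussianPi (hS : S.PosSemidef) (ξ : Fin d → ℝ) :
    ∫ x, |ξ ⬝ᵥ x| ∂gaussianPi 0 hS = √(ξ ⬝ᵥ S *ᵥ ξ) * ∫ y, |y| ∂gaussianReal 0 1 := by
  have hq : 0 ≤ ξ ⬝ᵥ S *ᵥ ξ := by simpa using hS.dotProduct_mulVec_nonneg ξ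
  rw [← integral_map (by fun_prop) (by fun_prop), map_dotProduct_gaussianPi,
    integral_abs_gaussianReal, coe_toNNReal _ hq]

end gaussianPi

lemma ConvexOrder.sqrt_dotProduct_mulVec_convexComb_le {d : ℕ}
    {S1 S2 : Matrix (Fin d) (Fin d) ℝ} (hS1 : S1.PosSemidef) (hS2 : S2.PosSemidef) {p : ℝ}
    (hp : p ∈ Set.Icc (0:ℝ) 1) (hmix : (p • S1 + (1 - p) • S2).PosSemidef)
    (hcx : ConvexOrder (gaussianPi 0 hmix)
      (ENNReal.ofReal p • gaussianPi 0 hS1 + ENNReal.ofReal (1 - p) • gaussianPi 0 hS2))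
    (ξ : Fin d → ℝ) :
    √(p * (ξ ⬝ᵥ S1 *ᵥ ξ) + (1 - p) * (ξ ⬝ᵥ S2 *ᵥ ξ)) ≤
      p * √(ξ ⬝ᵥ S1 *ᵥ ξ) + (1 - p) * √(ξ ⬝ᵥ S2 *ᵥ ξ) := by
  have hconvex : ConvexOn ℝ Set.univ (fun x : Fin d → ℝ => |ξ ⬝ᵥ x|) :=
    (convexOn_norm convex_univ).comp_linearMap (dotProductBilin ℝ ℝ ξ)
  have hint1 := (integrable_abs_dotProduct_gaussianPi hS1 ξ).smul_measure
    (ENNReal.ofReal_ne_top (r := p))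
  have hint2 := (integrable_abs_dotProduct_gaussianPi hS2 ξ).smul_measure
    (ENNReal.ofReal_ne_top (r := 1 - p))
  have key := hcx _ hconvex (integrable_abs_dotProduct_gaussianPi hmix ξ)
    (hint1.add_measure hint2)
  rw [integral_add_measure hint1 hint2, integral_smul_measure, integral_smul_measure,
    integral_abs_dotProduct_gaussianPi, integral_abs_dotProduct_gaussianPi,
    integral_abs_dotProduct_gaussianPi, ENNReal.toReal_ofReal hp.1,
    ENNReal.toReal_ofReal (sub_nonneg.mpr hp.2)] at key
  simp only [add_mulVec, smul_mulVec, dotProduct_add, dotProduct_smul, smul_eq_mul] at key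
  refine le_of_mul_le_mul_right ?_ integral_abs_gaussianReal_one_pos
  linarith

theorem stmt15 {d : ℕ} {S1 S2 : Matrix (Fin d) (Fin d) ℝ}
    (hS1 : S1.PosSemidef) (hS2 : S2.PosSemidef)
    {p1 : ℝ} (hp1 : p1 ∈ Set.Icc (0:ℝ) 1)
    (hmix : (p1 • S1 + (1 - p1) • S2).PosSemidef)
    (hcx : ConvexOrder (gaussianPi 0 hmix)
      (ENNReal.ofReal p1 • gaussianPi 0 hS1 +
        ENNReal.ofReal (1 - p1) • gaussianPi 0 hS2)) :
    p1 * (1 - p1) = 0 ∨ S1 = S2 := by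
  refine or_iff_not_imp_left.mpr fun hp => ?_
  have hp_pos : 0 < p1 * (1 - p1) :=
    lt_of_le_of_ne (mul_nonneg hp1.1 (sub_nonneg.mpr hp1.2)) (Ne.symm hp)
  refine hS1.1.eq_of_dotProduct_mulVec_eq hS2.1 fun ξ => ?_
  simp only [star_trivial]
  exact eq_of_sqrt_convexComb_le hp_pos (by simpa using hS1.dotProduct_mulVec_nonneg ξ)
    (by simpa using hS2.dotProduct_mulVec_nonneg ξ)
    (hcx.sqrt_dotProduct_mulVec_convexComb_le hS1 hS2 hp1 hmix ξ)
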